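/- arXiv:1809.08047 — 4 statements merged into one kernel-verified Lean document; each statement's English description precedes it below -/
import Mathlib

section
/- For a finite topological space X, the assignment sending a sheaf of abelian groups F on X to the abelian data p ↦ F(U_p) (with transition map F(U_p) → F(U_q) for p ≤ q given by restriction along the inclusion U_q ⊆ U_p) is an equivalence of categories between the category of sheaves of abelian groups on X and the category of abelian data on X. -/
/-!
The minimal open sets `U_p` form a basis of `X`, so by the comparison lemma sheaves on `X` are
the same as sheaves on this basis for the induced topology. That topology is trivial: a covering
sieve of `U_p` contains some open through `p`, which must contain `U_p`, so the sieve is maximal.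
Hence every presheaf on the basis is a sheaf, and the basis, ordered by inclusion, is the
opposite of the specialization preorder.
-/
open CategoryTheory Topology CategoryTheory.Limits TopologicalSpace

abbrev AbData (X : Type) [TopologicalSpace X] : Type 1 := Specialization X ⥤ AddCommGrpCat.{0}
abbrev pt {X : Type} [TopologicalSpace X] (x : X) : Specialization X := Specialization.toEquiv x

section spaces
variable {X : Type} [TopologicalSpace X]

/-- The minimal open subset containing a point (of a finite space). -/
def minOpen (x : X) : Set X := ⋂₀ {U : Set X | IsOpen U ∧ x ∈ U}

lemma isOpen_minOpen [Finite X] (x : X) : IsOpen (minOpen x) :=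
  Set.Finite.isOpen_sInter (Set.toFinite _) (fun _ hU => hU.1)

lemma mem_minOpen_iff {x z : X} : z ∈ minOpen x ↔ pt x ≤ pt z := by
  rw [Specialization.toEquiv_le_toEquiv, specializes_iff_forall_open]
  constructor
  · intro hz s hs hx
    exact hz s ⟨hs, hx⟩
  · intro h U hU
    exact h U hU.1 hU.2

lemma minOpen_anti {y y' : X} (h : pt y ≤ pt y') : minOpen y' ⊆ minOpen y := by
  intro z hz
  rw [mem_minOpen_iff] at hz ⊢
  exact le_trans h hz
end spaces

section sheaves
variable (X : TopCat.{0}) [Finite ↑X]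

/-- The minimal open subset `U_p` containing a point, as an object of `Opens X`. -/
noncomputable def Umin (p : ↑X) : Opens ↑X := ⟨minOpen p, isOpen_minOpen p⟩

lemma Umin_anti {p q : ↑X} (h : pt p ≤ pt q) : Umin X q ≤ Umin X p :=
  minOpen_anti h

/-- The functor sending a sheaf of abelian groups `F` on a finite topological space `X` to
the abelian data `p ↦ F(U_p)`, with transition maps given by restriction. -/
noncomputable def sheafToData : TopCat.Sheaf AddCommGrpCat.{0} X ⥤ AbData ↑X where
  obj F :=
    { obj := fun p => F.val.obj (Opposite.op (Umin X (Specialization.ofEquiv p)))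
      map := fun {p q} h => F.val.map (homOfLE (Umin_anti X (leOfHom h))).op
      map_id := fun p => by
        show F.val.map (homOfLE (Umin_anti X (leOfHom (𝟙 p)))).op = 𝟙 _
        rw [show (homOfLE (Umin_anti X (leOfHom (𝟙 p)))) = 𝟙 _ from Subsingleton.elim _ _,
          op_id, F.val.map_id]
      map_comp := fun {p q r} h1 h2 => by
        show F.val.map (homOfLE (Umin_anti X (leOfHom (h1 ≫ h2)))).op
          = F.val.map (homOfLE (Umin_anti X (leOfHom h1))).op
            ≫ F.val.map (homOfLE (Umin_anti X (leOfHom h2))).op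
        rw [← F.val.map_comp, ← op_comp]
        exact congrArg F.val.map (congrArg Quiver.Hom.op (Subsingleton.elim _ _)) }
  map {F G} α :=
    { app := fun p => α.hom.app _
      naturality := fun p q h => α.hom.naturality _ }
  map_id F := rfl
  map_comp α β := rfl

lemma minOpen_subset {Y : Type} [TopologicalSpace Y] {x : Y} {U : Set Y} (hU : IsOpen U)
    (hx : x ∈ U) : minOpen x ⊆ U :=
  Set.sInter_subset_of_mem ⟨hU, hx⟩

lemma mem_minOpen_self_s0 {Y : Type} [TopologicalSpace Y] (x : Y) : x ∈ minOpen x :=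
  mem_minOpen_iff.mpr le_rfl

lemma Umin_le_Umin_iff {p q : ↑X} : Umin X q ≤ Umin X p ↔ pt p ≤ pt q :=
  ⟨fun h => mem_minOpen_iff.mp (h (mem_minOpen_self_s0 q)), Umin_anti X⟩

lemma isBasis_range_Umin : Opens.IsBasis (Set.range (Umin X)) :=
  Opens.isBasis_iff_nbhd.mpr fun {U x} hx =>
    ⟨Umin X x, ⟨x, rfl⟩, mem_minOpen_self_s0 x, minOpen_subset U.isOpen hx⟩

abbrev UminCat : Type := InducedCategory (Opens ↑X) (Umin X)

noncomputable abbrev uminInclusion : UminCat X ⥤ Opens ↑X := inducedFunctor (Umin X)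

instance : (uminInclusion X).IsCoverDense (Opens.grothendieckTopology X) :=
  TopCat.Opens.coverDense_inducedFunctor (isBasis_range_Umin X)

noncomputable abbrev uminTopology : GrothendieckTopology (UminCat X) :=
  (uminInclusion X).inducedTopology (Opens.grothendieckTopology X)

lemma UminCat.hom_ext {i j : UminCat X} (f g : i ⟶ j) : f = g :=
  (uminInclusion X).map_injective (Subsingleton.elim _ _)

lemma uminTopology_le_bot : uminTopology X ≤ ⊥ := by
  intro p S hS
  rw [GrothendieckTopology.bot_covering, ← Sieve.id_mem_iff_eq_top]
  rw [Functor.mem_inducedTopology_iff_of_isCoverDense] at hS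
  obtain ⟨V, -, ⟨q, g, hVq, hg, -⟩, hpV⟩ := hS p (mem_minOpen_self_s0 (Y := ↑X) p)
  let k : p ⟶ q := (uminInclusion X).preimage
    (homOfLE (Umin_anti X (mem_minOpen_iff.mp (hVq.le hpV))))
  simpa only [UminCat.hom_ext X (k ≫ g) (𝟙 p)] using S.downward_closed hg k

instance : (sheafToPresheaf (uminTopology X) AddCommGrpCat.{0}).EssSurj :=
  ⟨fun P => ⟨⟨P, (Presheaf.isSheaf_bot P).of_le (uminTopology_le_bot X)⟩, ⟨Iso.refl _⟩⟩⟩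

instance : (sheafToPresheaf (uminTopology X) AddCommGrpCat.{0}).IsEquivalence where

noncomputable def specializationEquivUminCat : Specialization ↑X ≌ (UminCat X)ᵒᵖ where
  functor :=
    { obj := fun p => Opposite.op (Specialization.ofEquiv p)
      map := fun f => (InducedCategory.homMk (homOfLE (Umin_anti X (leOfHom f)))).op
      map_id := fun _ => Quiver.Hom.unop_inj (UminCat.hom_ext X _ _)
      map_comp := fun _ _ => Quiver.Hom.unop_inj (UminCat.hom_ext X _ _) }
  inverse :=
    { obj := fun i => pt (show ↑X from i.unop)
      map := fun f => homOfLE ((Umin_le_Umin_iff X).mp ((uminInclusion X).map f.unop).le)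
      map_id := fun _ => Subsingleton.elim _ _
      map_comp := fun _ _ => Subsingleton.elim _ _ }
  unitIso := NatIso.ofComponents (fun _ => Iso.refl _) (fun _ => Subsingleton.elim _ _)
  counitIso := NatIso.ofComponents (fun _ => Iso.refl _)
    (fun _ => Quiver.Hom.unop_inj (UminCat.hom_ext X _ _))
  functor_unitIso_comp := fun _ => Quiver.Hom.unop_inj (UminCat.hom_ext X _ _)

noncomputable def sheafEquivData : TopCat.Sheaf AddCommGrpCat.{0} X ≌ AbData ↑X :=
  ((uminInclusion X).sheafPushforwardContinuous AddCommGrpCat.{0} (uminTopology X)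
      (Opens.grothendieckTopology X)).asEquivalence.trans <|
    (sheafToPresheaf (uminTopology X) AddCommGrpCat.{0}).asEquivalence.trans
      (specializationEquivUminCat X).symm.congrLeft

noncomputable def sheafEquivDataFunctorIso : (sheafEquivData X).functor ≅ sheafToData X :=
  NatIso.ofComponents
    (fun _ => NatIso.ofComponents (fun _ => Iso.refl _)
      (fun _ => (Category.comp_id _).trans (Category.id_comp _).symm))
    (fun _ => rfl)

/-- For a finite topological space `X`, the assignment sending a sheaf of
abelian groups `F` on `X` to the abelian data `p ↦ F(U_p)` is an equivalence between the
category of sheaves of abelian groups on `X` and the category of abelian data on `X`. -/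
theorem statement0 : (sheafToData X).IsEquivalence :=
  Functor.isEquivalence_of_iso (sheafEquivDataFunctorIso X)
end sheaves
end

section
/- Let f : X → Y be a continuous map between finite topological spaces. The following are equivalent: (1) f is universally closed, i.e. for every finite topological space Ȳ and continuous map g : Ȳ → Y, the projection Ȳ ×_Y X → Ȳ is a closed map, where Ȳ ×_Y X = {(ȳ,x) : g(ȳ) = f(x)} carries the subspace topology of the product; (2) f is a closed map; (3) for every x ∈ X, the restriction f|_{C_x} : C_x → C_{f(x)} is surjective. -/
/-!
Condition (3) says that `f` lifts specializations, i.e. `f` is a `SpecializingMap`. In a finite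
(indeed Alexandrov-discrete) space the closed sets are exactly the sets stable under
specialization, so a specializing map into such a space is closed. Specializing maps are stable
under base change along continuous maps, which gives universal closedness; conversely, base
change along the identity recovers `f` itself.
-/

open Function Set Topology

variable {X Y Z : Type*} [TopologicalSpace X] [TopologicalSpace Y] [TopologicalSpace Z]

theorem StableUnderSpecialization.isClosed [AlexandrovDiscrete X] {s : Set X}
    (hs : StableUnderSpecialization s) : IsClosed s :=
  hs.Union_eq ▸ isClosed_iUnion₂ fun _ _ => isClosed_closure

theorem SpecializingMap.isClosedMap [AlexandrovDiscrete Y] {f : X → Y} (hf : SpecializingMap f) :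
    IsClosedMap f :=
  fun _ hs => (hf.stableUnderSpecialization_image hs.stableUnderSpecialization).isClosed

theorem SpecializingMap.pullback_fst {f : X → Y} {g : Z → Y} (hf : SpecializingMap f)
    (hg : Continuous g) : SpecializingMap (Pullback.fst : g.Pullback f → Z) := by
  rintro ⟨⟨z, x⟩, hzx⟩ z' (hz : z ⤳ z')
  have hfx : f x ⤳ g z' := hzx ▸ hz.map hg
  obtain ⟨x', hx, hx'⟩ := hf hfx
  refine ⟨⟨(z', x'), hx'.symm⟩, ?_, rfl⟩
  exact IsInducing.subtypeVal.specializes_iff.mp (specializes_prod.mpr ⟨hz, hx⟩)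

theorem SpecializingMap.of_pullback_fst_id {f : X → Y}
    (h : SpecializingMap (Pullback.fst : (id : Y → Y).Pullback f → Y)) : SpecializingMap f := by
  intro x y (hy : f x ⤳ y)
  obtain ⟨q, hq, rfl⟩ := h (a := ⟨(f x, x), rfl⟩) hy
  exact ⟨q.snd, (IsInducing.subtypeVal.specializes_iff.mpr hq).snd, q.prop.symm⟩

theorem statement6_general {X Y : Type} [TopologicalSpace X] [TopologicalSpace Y] [Finite Y]
    (f : X → Y) :
    List.TFAE [
      -- (1) universally closed
      ∀ (Z : Type) [TopologicalSpace Z] [Finite Z] (g : Z → Y), Continuous g →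
        IsClosedMap (fun q : {q : Z × X // g q.1 = f q.2} => q.1.1),
      -- (2) closed
      IsClosedMap f,
      -- (3) surjective on closures of points
      ∀ x : X, Set.SurjOn f (closure {x}) (closure {f x})] := by
  have surjOn_iff : (∀ x : X, SurjOn f (closure {x}) (closure {f x})) ↔ SpecializingMap f :=
    specializingMap_iff_closure_singleton_subset.symm
  rw [surjOn_iff]
  tfae_have 1 → 3
  | h1 => (h1 Y id continuous_id).specializingMap.of_pullback_fst_id
  tfae_have 3 → 1
  | hf, _, _, _, _, hg => (hf.pullback_fst hg).isClosedMap
  tfae_have 2 → 3 := IsClosedMap.specializingMap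
  tfae_have 3 → 2 := SpecializingMap.isClosedMap
  tfae_finish

/-- **Statement 6.** For a continuous map `f : X → Y` of finite topological spaces, the
following are equivalent: (1) `f` is universally closed; (2) `f` is closed; (3) for every
`x ∈ X`, the restriction `f|_{C_x} : C_x → C_{f(x)}` is surjective. -/
theorem statement6 {X Y : Type} [TopologicalSpace X] [TopologicalSpace Y] [Finite X] [Finite Y]
    (f : X → Y) (hf : Continuous f) :
    List.TFAE [
      -- (1) universally closed
      ∀ (Z : Type) [TopologicalSpace Z] [Finite Z] (g : Z → Y), Continuous g →
        IsClosedMap (fun q : {q : Z × X // g q.1 = f q.2} => q.1.1),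
      -- (2) closed
      IsClosedMap f,
      -- (3) surjective on closures of points
      ∀ x : X, Set.SurjOn f (closure {x}) (closure {f x})] :=
  statement6_general f
end

section
/- Let f : X → Y be a continuous map between finite topological spaces. The following are equivalent: (1) f is universally open, i.e. for every finite topological space Ȳ and continuous map g : Ȳ → Y, the projection Ȳ ×_Y X → Ȳ is an open map, where Ȳ ×_Y X = {(ȳ,x) : g(ȳ) = f(x)} carries the subspace topology of the product; (2) f is an open map; (3) for every x ∈ X, the restriction f|_{U_x} : U_x → U_{f(x)} is surjective. -/
lemma minOpen_eq_nhdsKer {X : Type} [TopologicalSpace X] (x : X) : minOpen x = nhdsKer {x} := by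
  simp only [minOpen, nhdsKer_def, Set.singleton_subset_iff]

section GeneralizingMap

variable {X Y Z : Type*} [TopologicalSpace X] [TopologicalSpace Y] [TopologicalSpace Z]
  {f : X → Y}

lemma generalizingMap_iff_surjOn_nhdsKer :
    GeneralizingMap f ↔ ∀ x, Set.SurjOn f (nhdsKer {x}) (nhdsKer {f x}) := by
  simp only [GeneralizingMap, Relation.Fibration, Set.SurjOn, Set.subset_def,
    mem_nhdsKer_singleton, Set.mem_image]

lemma IsOpenMap.generalizingMap [AlexandrovDiscrete X] (hf : IsOpenMap f) : GeneralizingMap f :=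
  generalizingMap_iff_surjOn_nhdsKer.2 fun x _ hy =>
    mem_nhdsKer_singleton.1 hy |>.mem_open (hf _ isOpen_nhdsKer) ⟨x, subset_nhdsKer rfl, rfl⟩

lemma GeneralizingMap.isOpenMap [AlexandrovDiscrete Y] (hf : GeneralizingMap f) : IsOpenMap f :=
  fun _ hU => isOpen_iff_forall_specializes.2 fun _ _ h hy =>
    hf.stableUnderGeneralization_image hU.stableUnderGeneralization h hy

lemma GeneralizingMap.pullback_fst (hf : GeneralizingMap f) {g : Z → Y} (hg : Continuous g) :
    GeneralizingMap (fun q : {q : Z × X // g q.1 = f q.2} => q.1.1) := by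
  rintro ⟨⟨z, x⟩, hzx⟩ z' hz'
  obtain ⟨x', hx', hfx'⟩ := hf (show g z' ⤳ f x from hzx ▸ hz'.map hg)
  exact ⟨⟨(z', x'), hfx'.symm⟩, (subtype_specializes_iff _ _).2 (hz'.prod hx'), rfl⟩

lemma isOpenMap_of_isOpenMap_graph_fst
    (h : IsOpenMap (fun q : {q : Y × X // q.1 = f q.2} => q.1.1)) : IsOpenMap f := by
  intro U hU
  convert h _ ((isOpen_univ.prod hU).preimage continuous_subtype_val) using 1
  ext y
  constructor
  · rintro ⟨x, hx, rfl⟩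
    exact ⟨⟨(f x, x), rfl⟩, ⟨trivial, hx⟩, rfl⟩
  · rintro ⟨⟨⟨y', x⟩, hq⟩, ⟨-, hx⟩, rfl⟩
    exact ⟨x, hx, hq.symm⟩

end GeneralizingMap

theorem statement7_general {X Y : Type} [TopologicalSpace X] [TopologicalSpace Y] [Finite X] [Finite Y]
    (f : X → Y) :
    List.TFAE [
      -- (1) universally open
      ∀ (Z : Type) [TopologicalSpace Z] [Finite Z] (g : Z → Y), Continuous g →
        IsOpenMap (fun q : {q : Z × X // g q.1 = f q.2} => q.1.1),
      -- (2) open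
      IsOpenMap f,
      -- (3) surjective on minimal open subsets
      ∀ x : X, Set.SurjOn f (minOpen x) (minOpen (f x))] := by
  simp only [minOpen_eq_nhdsKer, ← generalizingMap_iff_surjOn_nhdsKer]
  tfae_have 1 → 2 := fun h => isOpenMap_of_isOpenMap_graph_fst (h Y id continuous_id)
  tfae_have 2 → 3 := IsOpenMap.generalizingMap
  tfae_have 3 → 1 := fun hf Z _ _ g hg => (hf.pullback_fst hg).isOpenMap
  tfae_finish

/-- **Statement 7.** For a continuous map `f : X → Y` of finite topological spaces, the
following are equivalent: (1) `f` is universally open; (2) `f` is open; (3) for every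
`x ∈ X`, the restriction `f|_{U_x} : U_x → U_{f(x)}` is surjective. -/
theorem statement7 {X Y : Type} [TopologicalSpace X] [TopologicalSpace Y] [Finite X] [Finite Y]
    (f : X → Y) (hf : Continuous f) :
    List.TFAE [
      -- (1) universally open
      ∀ (Z : Type) [TopologicalSpace Z] [Finite Z] (g : Z → Y), Continuous g →
        IsOpenMap (fun q : {q : Z × X // g q.1 = f q.2} => q.1.1),
      -- (2) open
      IsOpenMap f,
      -- (3) surjective on minimal open subsets
      ∀ x : X, Set.SurjOn f (minOpen x) (minOpen (f x))] :=
  statement7_general f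
end

section
/- Let X be a finite topological space, F an abelian data on X, and G an abelian group. (1) For every closed subset Z ⊆ X there is a natural isomorphism Hom(F, G_Z) ≅ Hom(L(Z,F), G). (2) For every open subset U ⊆ X there is a natural isomorphism Hom(G_U, F) ≅ Hom(G, Γ(U,F)). Here the left-hand Homs are morphisms of abelian data and the right-hand Homs are group homomorphisms. -/
open CategoryTheory Topology CategoryTheory.Limits

section core
variable {X : Type} [TopologicalSpace X]
abbrev stalk (F : AbData X) (x : X) : Type := F.obj (pt x)

lemma naturality_apply {F G : AbData X} (φ : F ⟶ G) {p q : Specialization X} (h : p ⟶ q)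
    (a : F.obj p) : G.map h (φ.app p a) = φ.app q (F.map h a) := by
  have := congrArg (fun (f : F.obj p ⟶ G.obj q) => f a) (φ.naturality h)
  simp only [CategoryTheory.comp_apply] at this
  exact this.symm

/-- Compatible families: the sections of an abelian data over the whole space. -/
def compatSections (F : AbData X) : AddSubgroup (∀ x : X, F.obj (pt x)) where
  carrier := {u | ∀ (x y : X) (h : pt x ≤ pt y), F.map (homOfLE h) (u x) = u y}
  zero_mem' := by intro x y h; simp
  add_mem' := by intro u v hu hv x y h; simp [map_add, hu x y h, hv x y h]
  neg_mem' := by intro u hu x y h; simp [hu x y h]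

/-- The sections functor `Γ(X,-)`. -/
noncomputable def secFunctor (X : Type) [TopologicalSpace X] : AbData X ⥤ AddCommGrpCat.{0} where
  obj F := AddCommGrpCat.of (compatSections F)
  map {F G} φ :=
    AddCommGrpCat.ofHom
    { toFun := fun u => ⟨fun x => φ.app (pt x) (u.1 x), by
        intro x y h
        rw [naturality_apply φ (homOfLE h) (u.1 x), u.2 x y h]⟩
      map_zero' := by apply Subtype.ext; funext x; simp
      map_add' := by intro u v; apply Subtype.ext; funext x; simp }
  map_id := by intro F; apply AddCommGrpCat.hom_ext; apply AddMonoidHom.ext; intro u; rfl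
  map_comp := by intro F G H φ ψ; apply AddCommGrpCat.hom_ext; apply AddMonoidHom.ext; intro u; rfl

instance (X : Type) [TopologicalSpace X] : (secFunctor X).Additive where
  map_add := by
    intro F G φ ψ
    apply AddCommGrpCat.hom_ext; apply AddMonoidHom.ext; intro u; apply Subtype.ext; funext x
    rfl

noncomputable def cosecOf (F : AbData X) (x : X) : stalk F x →+ DirectSum X (stalk F) :=
  letI := Classical.decEq X
  DirectSum.of (stalk F) x

/-- The relations defining cosections (the colimit presentation). -/
noncomputable def cosecRel (F : AbData X) : AddSubgroup (DirectSum X (stalk F)) :=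
  AddSubgroup.closure {w | ∃ (x y : X) (h : pt x ≤ pt y) (a : stalk F x),
    w = cosecOf F y (F.map (homOfLE h) a) - cosecOf F x a}

/-- Cosections of `F` over the whole space: `L(X,F)`, presented as the quotient of the direct
sum `⊕ₓ F_x` by the relations `r_{xy}(a) - a`. -/
noncomputable def cosecGrp (F : AbData X) : AddCommGrpCat.{0} :=
  AddCommGrpCat.of (DirectSum X (stalk F) ⧸ cosecRel F)

noncomputable def cosecMk (F : AbData X) (x : X) : stalk F x →+ cosecGrp F :=
  (QuotientAddGroup.mk' (cosecRel F)).comp (cosecOf F x)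

lemma cosecHom_ext {F : AbData X} {H : Type} [AddCommGroup H] {f g : cosecGrp F →+ H}
    (h : ∀ (x : X) (a : stalk F x), f (cosecMk F x a) = g (cosecMk F x a)) : f = g := by
  letI := Classical.decEq X
  exact QuotientAddGroup.addMonoidHom_ext _ (DirectSum.addHom_ext fun x a => h x a)

noncomputable def cosecMapAux {F G : AbData X} (φ : F ⟶ G) :
    DirectSum X (stalk F) →+ cosecGrp G :=
  letI := Classical.decEq X
  DirectSum.toAddMonoid (fun x => (cosecMk G x).comp (φ.app (pt x)).hom)

lemma cosecMapAux_of {F G : AbData X} (φ : F ⟶ G) (x : X) (a : stalk F x) :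
    cosecMapAux φ (cosecOf F x a) = cosecMk G x (φ.app (pt x) a) := by
  letI := Classical.decEq X
  simp [cosecMapAux, cosecOf, DirectSum.toAddMonoid_of]

lemma cosecRel_le_ker {F G : AbData X} (φ : F ⟶ G) : cosecRel F ≤ (cosecMapAux φ).ker := by
  rw [cosecRel, AddSubgroup.closure_le]
  rintro w ⟨x, y, h, a, rfl⟩
  have : (cosecMapAux φ) (cosecOf F y ((F.map (homOfLE h)) a) - cosecOf F x a) = 0 := by
    rw [map_sub, cosecMapAux_of, cosecMapAux_of, ← naturality_apply φ (homOfLE h) a]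
    show (QuotientAddGroup.mk' (cosecRel G)) (cosecOf G y (G.map (homOfLE h) (φ.app (pt x) a)))
      - (QuotientAddGroup.mk' (cosecRel G)) (cosecOf G x (φ.app (pt x) a)) = 0
    rw [← map_sub]
    exact (QuotientAddGroup.eq_zero_iff _).mpr
      (AddSubgroup.subset_closure ⟨x, y, h, φ.app (pt x) a, rfl⟩)
  exact this

noncomputable def cosecMap {F G : AbData X} (φ : F ⟶ G) : cosecGrp F →+ cosecGrp G :=
  QuotientAddGroup.lift (cosecRel F) (cosecMapAux φ) (cosecRel_le_ker φ)

lemma cosecMap_mk {F G : AbData X} (φ : F ⟶ G) (x : X) (a : stalk F x) :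
    cosecMap φ (cosecMk F x a) = cosecMk G x (φ.app (pt x) a) := cosecMapAux_of φ x a

/-- The cosections functor `L(X,-)`. -/
noncomputable def cosecFunctor (X : Type) [TopologicalSpace X] : AbData X ⥤ AddCommGrpCat.{0} where
  obj F := cosecGrp F
  map φ := AddCommGrpCat.ofHom (cosecMap φ)
  map_id F := by
    refine AddCommGrpCat.hom_ext (cosecHom_ext fun x a => ?_)
    show cosecMap (𝟙 F) (cosecMk F x a) = cosecMk F x a
    rw [cosecMap_mk]; rfl
  map_comp φ ψ := by
    refine AddCommGrpCat.hom_ext (cosecHom_ext fun x a => ?_)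
    show cosecMap (φ ≫ ψ) (cosecMk _ x a) = cosecMap ψ (cosecMap φ (cosecMk _ x a))
    rw [cosecMap_mk, cosecMap_mk, cosecMap_mk]; rfl

instance (X : Type) [TopologicalSpace X] : (cosecFunctor X).Additive where
  map_add := by
    intro F G φ ψ
    refine AddCommGrpCat.hom_ext (cosecHom_ext fun x a => ?_)
    show cosecMap (φ + ψ) (cosecMk F x a) = (cosecMap φ + cosecMap ψ) (cosecMk F x a)
    rw [AddMonoidHom.add_apply, cosecMap_mk, cosecMap_mk, cosecMap_mk]
    show cosecMk G x ((φ.app (pt x) + ψ.app (pt x)) a) = _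
    exact map_add (cosecMk G x) _ _
end core

section restriction
variable {X : Type} [TopologicalSpace X]

/-- The inclusion of a subspace, as a functor between specialization preorders. -/
def inc (S : Set X) : Specialization ↥S ⥤ Specialization X :=
  (Specialization.map ⟨(Subtype.val : S → X), continuous_subtype_val⟩).monotone.functor

/-- Restriction of abelian data to a subspace. -/
def restr (S : Set X) : AbData X ⥤ AbData ↥S := (Functor.whiskeringLeft _ _ _).obj (inc S)

lemma subtype_pt_le_iff {S : Set X} (a b : ↥S) : pt a ≤ pt b ↔ pt (a : X) ≤ pt (b : X) := by
  rw [Specialization.toEquiv_le_toEquiv, Specialization.toEquiv_le_toEquiv]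
  exact (subtype_specializes_iff b a).trans Iff.rfl

lemma data_map_eq (F : AbData X) {p q : Specialization X} (h h' : p ⟶ q) : F.map h = F.map h' := by
  congr 1
  apply Subsingleton.elim

/-- Sections of `F` over the subspace `S`: `Γ(S,F)`. -/
noncomputable def secGrpOn (S : Set X) (F : AbData X) : AddCommGrpCat.{0} :=
  (secFunctor ↥S).obj ((restr S).obj F)

/-- Cosections of `F` over the subspace `S`: `L(S,F)`. -/
noncomputable def cosecGrpOn (S : Set X) (F : AbData X) : AddCommGrpCat.{0} :=
  (cosecFunctor ↥S).obj ((restr S).obj F)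

/-- Restriction of sections along an inclusion of subspaces `T ⊆ S`. -/
noncomputable def secResOn (F : AbData X) {S T : Set X} (hTS : T ⊆ S) :
    secGrpOn S F →+ secGrpOn T F where
  toFun u := (⟨fun x => u.1 ⟨x.1, hTS x.2⟩, by
    intro x y h
    have hS : pt (⟨x.1, hTS x.2⟩ : ↥S) ≤ pt (⟨y.1, hTS y.2⟩ : ↥S) := by
      rw [subtype_pt_le_iff]
      exact (subtype_pt_le_iff x y).mp h
    have hu := u.2 ⟨x.1, hTS x.2⟩ ⟨y.1, hTS y.2⟩ hS
    have heq : ((restr T).obj F).map (homOfLE h) = ((restr S).obj F).map (homOfLE hS) :=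
      data_map_eq F _ _
    rw [heq]
    exact hu⟩ : compatSections ((restr T).obj F))
  map_zero' := rfl
  map_add' u v := rfl

noncomputable def cosecExtAux (F : AbData X) {S T : Set X} (hST : S ⊆ T) :
    DirectSum ↥S (stalk ((restr S).obj F)) →+ cosecGrp ((restr T).obj F) :=
  letI := Classical.decEq ↥S
  DirectSum.toAddMonoid (fun x => cosecMk ((restr T).obj F) ⟨x.1, hST x.2⟩)

lemma cosecExtAux_of (F : AbData X) {S T : Set X} (hST : S ⊆ T) (x : ↥S)
    (a : stalk ((restr S).obj F) x) :
    cosecExtAux F hST (cosecOf ((restr S).obj F) x a)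
      = cosecMk ((restr T).obj F) ⟨x.1, hST x.2⟩ a := by
  letI := Classical.decEq ↥S
  simp only [cosecExtAux, cosecOf, DirectSum.toAddMonoid_of]
  exact DirectSum.toAddMonoid_of _ _ _

/-- Extension of cosections along an inclusion of subspaces `S ⊆ T`. -/
noncomputable def cosecExtOn (F : AbData X) {S T : Set X} (hST : S ⊆ T) :
    cosecGrp ((restr S).obj F) →+ cosecGrp ((restr T).obj F) := by
  refine QuotientAddGroup.lift _ (cosecExtAux F hST) ?_
  rw [cosecRel, AddSubgroup.closure_le]
  rintro w ⟨x, y, h, a, rfl⟩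
  have hT : pt (⟨x.1, hST x.2⟩ : ↥T) ≤ pt (⟨y.1, hST y.2⟩ : ↥T) := by
    rw [subtype_pt_le_iff]; exact (subtype_pt_le_iff x y).mp h
  have heq : ((restr S).obj F).map (homOfLE h) = ((restr T).obj F).map (homOfLE hT) :=
    data_map_eq F _ _
  rw [SetLike.mem_coe, AddMonoidHom.mem_ker, map_sub, heq, cosecExtAux_of, cosecExtAux_of]
  show (QuotientAddGroup.mk' (cosecRel _)) (_ - _) = 0
  exact (QuotientAddGroup.eq_zero_iff _).mpr
    (AddSubgroup.subset_closure ⟨⟨x.1, hST x.2⟩, ⟨y.1, hST y.2⟩, hT, a, rfl⟩)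

lemma cosecExtOn_mk (F : AbData X) {S T : Set X} (hST : S ⊆ T) (x : ↥S)
    (a : stalk ((restr S).obj F) x) :
    cosecExtOn F hST (cosecMk ((restr S).obj F) x a)
      = cosecMk ((restr T).obj F) ⟨x.1, hST x.2⟩ a := cosecExtAux_of F hST x a

end restriction

section spaces
variable {X : Type} [TopologicalSpace X]

lemma mem_minOpen_self (x : X) : x ∈ minOpen x := fun _ hU => hU.2

lemma mem_closure_iff_pt_le {x z : X} : z ∈ closure ({x} : Set X) ↔ pt z ≤ pt x := by
  rw [Specialization.toEquiv_le_toEquiv, specializes_iff_mem_closure]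

lemma closure_singleton_mono {y y' : X} (h : pt y ≤ pt y') :
    closure ({y} : Set X) ⊆ closure ({y'} : Set X) := by
  intro z hz
  rw [mem_closure_iff_pt_le] at hz ⊢
  exact le_trans hz h
end spaces

section directimages
variable {X Y : Type} [TopologicalSpace X] [TopologicalSpace Y]

/-- Restriction of global sections to sections over a subspace. -/
noncomputable def secResToSub (F : AbData X) (S : Set X) :
    (secFunctor X).obj F →+ secGrpOn S F where
  toFun u := (⟨fun x => u.1 x.1, by
    intro x y h
    have hX : pt (x : X) ≤ pt (y : X) := (subtype_pt_le_iff x y).mp h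
    have hu := u.2 x.1 y.1 hX
    have heq : ((restr S).obj F).map (homOfLE h) = F.map (homOfLE hX) := data_map_eq F _ _
    rw [heq]
    exact hu⟩ : compatSections ((restr S).obj F))
  map_zero' := rfl
  map_add' u v := rfl

noncomputable def cosecFromSubAux (F : AbData X) (S : Set X) :
    DirectSum ↥S (stalk ((restr S).obj F)) →+ cosecGrp F :=
  letI := Classical.decEq ↥S
  DirectSum.toAddMonoid (fun x => cosecMk F x.1)

lemma cosecFromSubAux_of (F : AbData X) (S : Set X) (x : ↥S)
    (a : stalk ((restr S).obj F) x) :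
    cosecFromSubAux F S (cosecOf ((restr S).obj F) x a) = cosecMk F x.1 a := by
  letI := Classical.decEq ↥S
  simp only [cosecFromSubAux, cosecOf, DirectSum.toAddMonoid_of]
  exact DirectSum.toAddMonoid_of _ _ _

/-- Extension of cosections over a subspace to global cosections. -/
noncomputable def cosecExtFromSub (F : AbData X) (S : Set X) :
    cosecGrp ((restr S).obj F) →+ cosecGrp F := by
  refine QuotientAddGroup.lift _ (cosecFromSubAux F S) ?_
  rw [cosecRel, AddSubgroup.closure_le]
  rintro w ⟨x, y, h, a, rfl⟩
  have hX : pt (x : X) ≤ pt (y : X) := (subtype_pt_le_iff x y).mp h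
  have heq : ((restr S).obj F).map (homOfLE h) = F.map (homOfLE hX) := data_map_eq F _ _
  rw [SetLike.mem_coe, AddMonoidHom.mem_ker, map_sub, heq, cosecFromSubAux_of,
    cosecFromSubAux_of]
  show (QuotientAddGroup.mk' (cosecRel _)) (_ - _) = 0
  exact (QuotientAddGroup.eq_zero_iff _).mpr
    (AddSubgroup.subset_closure ⟨x.1, y.1, hX, a, rfl⟩)

lemma cosecExtFromSub_mk (F : AbData X) (S : Set X) (x : ↥S)
    (a : stalk ((restr S).obj F) x) :
    cosecExtFromSub F S (cosecMk ((restr S).obj F) x a) = cosecMk F x.1 a :=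
  cosecFromSubAux_of F S x a

/-- An abelian data is flasque if all restrictions to open subsets are surjective. -/
def Flasque (F : AbData X) : Prop :=
  ∀ U : Set X, IsOpen U → Function.Surjective (secResToSub F U)

/-- An abelian data is coflasque if all extensions from closed subsets are injective. -/
def Coflasque (F : AbData X) : Prop :=
  ∀ C : Set X, IsClosed C → Function.Injective (cosecExtFromSub F C)

/-- The inverse image functor `f⁻¹`. -/
def invIm (f : C(X, Y)) : AbData Y ⥤ AbData X :=
  (Functor.whiskeringLeft _ _ _).obj (Specialization.map f).monotone.functor

/-- The direct image functor `f_*`, defined stalkwise by `(f_* F)_y = Γ(f⁻¹(U_y), F)`. -/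
noncomputable def pushforward (f : C(X, Y)) : AbData X ⥤ AbData Y where
  obj F :=
    { obj := fun y => secGrpOn (f ⁻¹' minOpen (Specialization.ofEquiv y)) F
      map := fun {y y'} h => AddCommGrpCat.ofHom (secResOn F (Set.preimage_mono
        (minOpen_anti (y := Specialization.ofEquiv y) (y' := Specialization.ofEquiv y') (leOfHom h))))
      map_id := fun y => by
        apply AddCommGrpCat.hom_ext; apply AddMonoidHom.ext; intro u; apply Subtype.ext; rfl
      map_comp := fun h1 h2 => by
        apply AddCommGrpCat.hom_ext; apply AddMonoidHom.ext; intro u; apply Subtype.ext; rfl }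
  map {F G} φ :=
    { app := fun y => (secFunctor _).map ((restr _).map φ)
      naturality := fun y y' h => by
        apply AddCommGrpCat.hom_ext; apply AddMonoidHom.ext; intro u; apply Subtype.ext; rfl }
  map_id F := by
    apply NatTrans.ext; funext y; apply AddCommGrpCat.hom_ext; apply AddMonoidHom.ext; intro u
    apply Subtype.ext; rfl
  map_comp φ ψ := by
    apply NatTrans.ext; funext y; apply AddCommGrpCat.hom_ext; apply AddMonoidHom.ext; intro u
    apply Subtype.ext; rfl

lemma cosecExtOn_refl (F : AbData X) {S : Set X} (h : S ⊆ S) :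
    cosecExtOn F h = AddMonoidHom.id (cosecGrp ((restr S).obj F)) := by
  refine cosecHom_ext fun x a => ?_
  rw [cosecExtOn_mk]
  rfl

lemma cosecExtOn_trans (F : AbData X) {S T V : Set X} (h1 : S ⊆ T) (h2 : T ⊆ V)
    (h3 : S ⊆ V) :
    cosecExtOn F h3 = (cosecExtOn F h2).comp (cosecExtOn F h1) := by
  refine cosecHom_ext fun x a => ?_
  rw [cosecExtOn_mk, AddMonoidHom.comp_apply, cosecExtOn_mk]
  exact (cosecExtOn_mk F h2 (⟨x.1, h1 x.2⟩ : ↥T) a).symm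

lemma cosecExtOn_natural {F G : AbData X} (φ : F ⟶ G) {S T : Set X} (h : S ⊆ T) :
    (cosecMap ((restr T).map φ)).comp (cosecExtOn F h)
      = (cosecExtOn G h).comp (cosecMap ((restr S).map φ)) := by
  refine cosecHom_ext fun x a => ?_
  rw [AddMonoidHom.comp_apply, AddMonoidHom.comp_apply, cosecExtOn_mk, cosecMap_mk,
    cosecExtOn_mk]
  exact cosecMap_mk ((restr T).map φ) (⟨x.1, h x.2⟩ : ↥T) a

/-- The stalk of `f_! F`: cosections over `f⁻¹(C_y)`. -/
noncomputable def shriekObj (f : C(X, Y)) (F : AbData X) : AbData Y where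
  obj y := cosecGrpOn (f ⁻¹' closure {Specialization.ofEquiv y}) F
  map {y y'} h := AddCommGrpCat.ofHom (cosecExtOn F (Set.preimage_mono
    (closure_singleton_mono (y := Specialization.ofEquiv y) (y' := Specialization.ofEquiv y')
      (leOfHom h))))
  map_id y := AddCommGrpCat.hom_ext (cosecExtOn_refl F _)
  map_comp {y₁ y₂ y₃} h1 h2 := AddCommGrpCat.hom_ext (cosecExtOn_trans F _ _ _)

/-- The codirect image functor `f_!`, defined stalkwise by `(f_! F)_y = L(f⁻¹(C_y), F)`. -/
noncomputable def shriek (f : C(X, Y)) : AbData X ⥤ AbData Y where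
  obj F := shriekObj f F
  map {F G} φ :=
    { app := fun y => (cosecFunctor _).map ((restr _).map φ)
      naturality := fun y y' h => AddCommGrpCat.hom_ext (cosecExtOn_natural φ _) }
  map_id F := by
    refine NatTrans.ext (funext fun y => ?_)
    show (cosecFunctor _).map ((restr _).map (𝟙 F)) = _
    rw [CategoryTheory.Functor.map_id, CategoryTheory.Functor.map_id]
    rfl
  map_comp φ ψ := by
    refine NatTrans.ext (funext fun y => ?_)
    show (cosecFunctor _).map ((restr _).map (φ ≫ ψ)) = _
    rw [CategoryTheory.Functor.map_comp, CategoryTheory.Functor.map_comp]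
    rfl
end directimages

instance pushforwardAdditive {X Y : Type} [TopologicalSpace X] [TopologicalSpace Y]
    (f : C(X, Y)) : (pushforward f).Additive where
  map_add := by
    intro F G φ ψ
    refine NatTrans.ext (funext fun y => ?_)
    apply AddCommGrpCat.hom_ext; apply AddMonoidHom.ext; intro u; apply Subtype.ext; funext x
    rfl

instance shriekAdditive {X Y : Type} [TopologicalSpace X] [TopologicalSpace Y]
    (f : C(X, Y)) : (shriek f).Additive where
  map_add := by
    intro F G φ ψ
    refine NatTrans.ext (funext fun y => ?_)
    refine AddCommGrpCat.hom_ext (cosecHom_ext fun x a => ?_)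
    show cosecMap ((restr _).map (φ + ψ)) (cosecMk _ x a)
      = cosecMap ((restr _).map φ) (cosecMk _ x a) + cosecMap ((restr _).map ψ) (cosecMk _ x a)
    rw [cosecMap_mk, cosecMap_mk, cosecMap_mk]
    exact map_add _ _ _


section supp
open CategoryTheory
variable {X : Type} [TopologicalSpace X]

lemma mem_of_isLocallyClosed {S : Set X} (hS : IsLocallyClosed S) {p q r : X}
    (h1 : q ⤳ p) (h2 : r ⤳ q) (hp : p ∈ S) (hr : r ∈ S) : q ∈ S := by
  obtain ⟨U, Z, hU, hZ, rfl⟩ := hS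
  exact ⟨h1.mem_open hU hp.1, h2.mem_closed hZ hr.2⟩

open Classical in
/-- The abelian data `G_S` supported on a locally closed subset `S`: the stalk at `p` is `G`
if `p ∈ S` and `0` otherwise; the transition maps are the identity between points of `S` and
zero otherwise. -/
noncomputable def suppData (G : AddCommGrpCat.{0}) (S : Set X) (hS : IsLocallyClosed S) :
    AbData X where
  obj p := if (Specialization.ofEquiv p : X) ∈ S then G else AddCommGrpCat.of PUnit
  map {p q} h :=
    if hp : (Specialization.ofEquiv p : X) ∈ S then
      if hq : (Specialization.ofEquiv q : X) ∈ S then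
        eqToHom (if_pos hp) ≫ eqToHom (if_pos hq).symm
      else 0
    else 0
  map_id p := by
    by_cases hp : (Specialization.ofEquiv p : X) ∈ S
    · simp [hp]
    · have hsub : Subsingleton
          ((if (Specialization.ofEquiv p : X) ∈ S then G else AddCommGrpCat.of PUnit) : AddCommGrpCat) := by
        rw [if_neg hp]
        exact inferInstanceAs (Subsingleton PUnit)
      simp only [dif_neg hp]
      exact AddCommGrpCat.hom_ext (AddMonoidHom.ext fun a => Subsingleton.elim _ _)
  map_comp {p q r} h1 h2 := by
    have hmid : (Specialization.ofEquiv p : X) ∈ S → (Specialization.ofEquiv r : X) ∈ S →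
        (Specialization.ofEquiv q : X) ∈ S := fun hp hr =>
      mem_of_isLocallyClosed hS (Specialization.ofEquiv_specializes_ofEquiv.mpr (leOfHom h1))
        (Specialization.ofEquiv_specializes_ofEquiv.mpr (leOfHom h2)) hp hr
    by_cases hp : (Specialization.ofEquiv p : X) ∈ S
    · by_cases hr : (Specialization.ofEquiv r : X) ∈ S
      · have hq := hmid hp hr
        simp [hp, hq, hr]
      · by_cases hq : (Specialization.ofEquiv q : X) ∈ S
        · simp [hp, hq, hr]
        · simp [hp, hq, hr]
    · simp [hp]

/-- The map induced by `φ : F ⟶ F'` on sections over a subspace. -/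
noncomputable def secMapOn (U : Set X) {F F' : AbData X} (φ : F ⟶ F') :
    secGrpOn U F →+ secGrpOn U F' :=
  ((secFunctor ↥U).map ((restr U).map φ)).hom

/-- The map induced by `φ : F ⟶ F'` on cosections over a subspace. -/
noncomputable def cosecMapOn (S : Set X) {F F' : AbData X} (φ : F ⟶ F') :
    cosecGrpOn S F →+ cosecGrpOn S F' :=
  cosecMap ((restr S).map φ)
end supp


/-!
`L(Z,F)` and `Γ(U,F)` are the colimit and the limit of the stalks over the points of the
subspace, so `Hom(L(Z,F), G)` is the group of cocones `(F_z → G)_{z ∈ Z}` and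
`Hom(G, Γ(U,F))` the group of cones `(G → F_u)_{u ∈ U}`. A morphism `F ⟶ G_Z` is determined
by its components at points of `Z`, because the other stalks of `G_Z` vanish, and naturality
for `p ≤ q` says exactly that these components form a cocone: if `q ∉ Z` there is nothing to
check, and if `q ∈ Z` then `p ∈ Z` since a closed set is downward closed. Dually, an open set
is upward closed, which identifies morphisms `G_U ⟶ F` with cones.
-/

section universalProperties
variable {Y : Type} [TopologicalSpace Y]

@[ext]
structure StalkCocone (F : AbData Y) (H : Type) [AddCommGroup H] where
  app : ∀ y, stalk F y →+ H
  app_map : ∀ (x y : Y) (h : pt x ≤ pt y) (a : stalk F x), app y (F.map (homOfLE h) a) = app x a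

@[ext]
structure StalkCone (H : Type) [AddCommGroup H] (F : AbData Y) where
  app : ∀ y, H →+ stalk F y
  map_app : ∀ (x y : Y) (h : pt x ≤ pt y) (g : H), F.map (homOfLE h) (app x g) = app y g

variable (F : AbData Y) (H : Type) [AddCommGroup H]

lemma cosecMk_map {x y : Y} (h : pt x ≤ pt y) (a : stalk F x) :
    cosecMk F y (F.map (homOfLE h) a) = cosecMk F x a := by
  change (QuotientAddGroup.mk (cosecOf F y _) : DirectSum Y (stalk F) ⧸ cosecRel F) =
    QuotientAddGroup.mk (cosecOf F x a)
  exact QuotientAddGroup.eq_iff_sub_mem.mpr (AddSubgroup.subset_closure ⟨x, y, h, a, rfl⟩)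

variable {F H} in
noncomputable def cosecLift (c : StalkCocone F H) : cosecGrp F →+ H :=
  letI := Classical.decEq Y
  QuotientAddGroup.lift (cosecRel F) (DirectSum.toAddMonoid c.app) <| by
    rw [cosecRel, AddSubgroup.closure_le]
    rintro _ ⟨x, y, h, a, rfl⟩
    simp [cosecOf, c.app_map x y h a]

variable {F H} in
lemma cosecLift_mk (c : StalkCocone F H) (x : Y) (a : stalk F x) :
    cosecLift c (cosecMk F x a) = c.app x a := by
  let := Classical.decEq Y
  exact DirectSum.toAddMonoid_of c.app x a

noncomputable def cosecHomEquiv : (cosecGrp F →+ H) ≃ StalkCocone F H where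
  toFun f := ⟨fun x => f.comp (cosecMk F x), fun _ _ h a => congrArg f (cosecMk_map F h a)⟩
  invFun := cosecLift
  left_inv _ := cosecHom_ext fun x a => cosecLift_mk _ x a
  right_inv c := StalkCocone.ext <| funext fun x => AddMonoidHom.ext fun a => cosecLift_mk c x a

def secHomEquiv : (H →+ (secFunctor Y).obj F) ≃ StalkCone H F where
  toFun f := ⟨fun x => (Pi.evalAddMonoidHom _ x).comp ((compatSections F).subtype.comp f),
    fun x y h g => (f g).2 x y h⟩
  invFun c := (AddMonoidHom.pi c.app).codRestrict (compatSections F)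
    fun g x y h => c.map_app x y h g
  left_inv _ := rfl
  right_inv _ := rfl

end universalProperties

section suppData
variable {X : Type} [TopologicalSpace X] (G : AddCommGrpCat.{0}) {S : Set X}
  (hS : IsLocallyClosed S)

noncomputable def suppDataIso {x : X} (hx : x ∈ S) : (suppData G S hS).obj (pt x) ≅ G :=
  eqToIso (if_pos hx)

lemma suppData_map_of_mem {x y : X} (h : pt x ⟶ pt y) (hx : x ∈ S) (hy : y ∈ S) :
    (suppData G S hS).map h = (suppDataIso G hS hx).hom ≫ (suppDataIso G hS hy).inv := by
  simp only [suppData, suppDataIso]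
  rw [dif_pos (show Specialization.ofEquiv (pt x) ∈ S from hx),
    dif_pos (show Specialization.ofEquiv (pt y) ∈ S from hy)]
  rfl

lemma isZero_suppData_obj {x : X} (hx : x ∉ S) : IsZero ((suppData G S hS).obj (pt x)) := by
  rw [show (suppData G S hS).obj (pt x) = AddCommGrpCat.of PUnit from if_neg hx]
  exact AddCommGrpCat.isZero_of_subsingleton _

end suppData

section closedSupport
variable {X : Type} [TopologicalSpace X] (G : AddCommGrpCat.{0}) {Z : Set X} (hZ : IsClosed Z)
  {F : AbData X}

noncomputable def StalkCocone.ofHomSuppData (ψ : F ⟶ suppData G Z hZ.isLocallyClosed) :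
    StalkCocone ((restr Z).obj F) G where
  app x := (ψ.app (pt x.1) ≫ (suppDataIso G _ x.2).hom).hom
  app_map x y h a := by
    have hψ := ψ.naturality (homOfLE ((subtype_pt_le_iff x y).mp h))
    rw [suppData_map_of_mem G _ _ x.2 y.2, ← Category.assoc, Iso.eq_comp_inv] at hψ
    exact ConcreteCategory.congr_hom hψ a

open Classical in
noncomputable def StalkCocone.toHomSuppDataApp (c : StalkCocone ((restr Z).obj F) G)
    (p : Specialization X) : F.obj p ⟶ (suppData G Z hZ.isLocallyClosed).obj p :=
  if hp : (Specialization.ofEquiv p : X) ∈ Z then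
    AddCommGrpCat.ofHom (c.app ⟨_, hp⟩) ≫ (suppDataIso G _ hp).inv
  else 0

lemma StalkCocone.toHomSuppDataApp_pt (c : StalkCocone ((restr Z).obj F) G) {x : X}
    (hx : x ∈ Z) :
    c.toHomSuppDataApp G hZ (pt x) =
      AddCommGrpCat.ofHom (c.app ⟨x, hx⟩) ≫ (suppDataIso G _ hx).inv :=
  dif_pos hx

noncomputable def StalkCocone.toHomSuppData (c : StalkCocone ((restr Z).obj F) G) :
    F ⟶ suppData G Z hZ.isLocallyClosed where
  app := c.toHomSuppDataApp G hZ
  naturality p q h := by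
    induction p with | _ x
    induction q with | _ y
    by_cases hy : y ∈ Z
    · have hx : x ∈ Z := (leOfHom h).mem_closed hZ hy
      rw [c.toHomSuppDataApp_pt G hZ hx, c.toHomSuppDataApp_pt G hZ hy,
        suppData_map_of_mem G _ h hx hy]
      ext a
      change (suppDataIso G _ hy).inv (c.app ⟨y, hy⟩ (F.map h a)) = (suppDataIso G _ hy).inv
        ((suppDataIso G _ hx).hom ((suppDataIso G _ hx).inv (c.app ⟨x, hx⟩ a)))
      rw [Iso.inv_hom_id_apply]
      exact congrArg (suppDataIso G _ hy).inv
        (c.app_map ⟨x, hx⟩ ⟨y, hy⟩ ((subtype_pt_le_iff _ _).mpr (leOfHom h)) a)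
    · exact (isZero_suppData_obj G _ hy).eq_of_tgt _ _

noncomputable def homSuppDataEquiv (F : AbData X) :
    (F ⟶ suppData G Z hZ.isLocallyClosed) ≃ StalkCocone ((restr Z).obj F) G where
  toFun := StalkCocone.ofHomSuppData G hZ
  invFun := StalkCocone.toHomSuppData G hZ
  left_inv ψ := by
    ext p : 2
    induction p with | _ x
    by_cases hx : x ∈ Z
    · ext a
      change ((StalkCocone.ofHomSuppData G hZ ψ).toHomSuppDataApp G hZ (pt x)) a = ψ.app (pt x) a
      rw [StalkCocone.toHomSuppDataApp_pt G hZ _ hx]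
      exact Iso.hom_inv_id_apply (suppDataIso G _ hx) (ψ.app (pt x) a)
    · exact (isZero_suppData_obj G _ hx).eq_of_tgt _ _
  right_inv c := by
    refine StalkCocone.ext <| funext fun x => AddMonoidHom.ext fun a => ?_
    change (suppDataIso G _ x.2).hom (c.toHomSuppDataApp G hZ (pt x.1) a) = c.app x a
    rw [c.toHomSuppDataApp_pt G hZ x.2]
    exact Iso.inv_hom_id_apply (suppDataIso G _ x.2) (c.app x a)

end closedSupport

section openSupport
variable {X : Type} [TopologicalSpace X] (G : AddCommGrpCat.{0}) {U : Set X} (hU : IsOpen U)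
  {F : AbData X}

noncomputable def StalkCone.ofSuppDataHom (ψ : suppData G U hU.isLocallyClosed ⟶ F) :
    StalkCone G ((restr U).obj F) where
  app x := ((suppDataIso G _ x.2).inv ≫ ψ.app (pt x.1)).hom
  map_app x y h g := by
    have hψ := ψ.naturality (homOfLE ((subtype_pt_le_iff x y).mp h))
    rw [suppData_map_of_mem G _ _ x.2 y.2, Category.assoc, ← Iso.eq_inv_comp] at hψ
    exact (ConcreteCategory.congr_hom hψ g).symm

open Classical in
noncomputable def StalkCone.toSuppDataHomApp (c : StalkCone G ((restr U).obj F))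
    (p : Specialization X) : (suppData G U hU.isLocallyClosed).obj p ⟶ F.obj p :=
  if hp : (Specialization.ofEquiv p : X) ∈ U then
    (suppDataIso G _ hp).hom ≫ AddCommGrpCat.ofHom (c.app ⟨_, hp⟩)
  else 0

lemma StalkCone.toSuppDataHomApp_pt (c : StalkCone G ((restr U).obj F)) {x : X} (hx : x ∈ U) :
    c.toSuppDataHomApp G hU (pt x) =
      (suppDataIso G _ hx).hom ≫ AddCommGrpCat.ofHom (c.app ⟨x, hx⟩) :=
  dif_pos hx

noncomputable def StalkCone.toSuppDataHom (c : StalkCone G ((restr U).obj F)) :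
    suppData G U hU.isLocallyClosed ⟶ F where
  app := c.toSuppDataHomApp G hU
  naturality p q h := by
    induction p with | _ x
    induction q with | _ y
    by_cases hx : x ∈ U
    · have hy : y ∈ U := (leOfHom h).mem_open hU hx
      rw [c.toSuppDataHomApp_pt G hU hx, c.toSuppDataHomApp_pt G hU hy,
        suppData_map_of_mem G _ h hx hy]
      ext a
      change c.app ⟨y, hy⟩ ((suppDataIso G _ hy).hom ((suppDataIso G _ hy).inv
        ((suppDataIso G _ hx).hom a))) = F.map h (c.app ⟨x, hx⟩ ((suppDataIso G _ hx).hom a))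
      rw [Iso.inv_hom_id_apply]
      exact (c.map_app ⟨x, hx⟩ ⟨y, hy⟩ ((subtype_pt_le_iff _ _).mpr (leOfHom h)) _).symm
    · exact (isZero_suppData_obj G _ hx).eq_of_src _ _

noncomputable def suppDataHomEquiv (F : AbData X) :
    (suppData G U hU.isLocallyClosed ⟶ F) ≃ StalkCone G ((restr U).obj F) where
  toFun := StalkCone.ofSuppDataHom G hU
  invFun := StalkCone.toSuppDataHom G hU
  left_inv ψ := by
    ext p : 2
    induction p with | _ x
    by_cases hx : x ∈ U
    · ext a
      change ((StalkCone.ofSuppDataHom G hU ψ).toSuppDataHomApp G hU (pt x)) a = ψ.app (pt x) a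
      rw [StalkCone.toSuppDataHomApp_pt G hU _ hx]
      exact congrArg (ψ.app (pt x)) (Iso.hom_inv_id_apply (suppDataIso G _ hx) a)
    · exact (isZero_suppData_obj G _ hx).eq_of_src _ _
  right_inv c := by
    refine StalkCone.ext <| funext fun x => AddMonoidHom.ext fun g => ?_
    change c.toSuppDataHomApp G hU (pt x.1) ((suppDataIso G _ x.2).inv g) = c.app x g
    rw [c.toSuppDataHomApp_pt G hU x.2]
    exact congrArg (c.app x) (Iso.inv_hom_id_apply (suppDataIso G _ x.2) g)

end openSupport

theorem statement15_general {X : Type} [TopologicalSpace X] (G : AddCommGrpCat.{0}) :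
    (∀ (Z : Set X) (hZ : IsClosed Z),
      ∃ e : ∀ F : AbData X, (F ⟶ suppData G Z hZ.isLocallyClosed) ≃ (cosecGrpOn Z F →+ G),
        ∀ (F F' : AbData X) (φ : F' ⟶ F) (ψ : F ⟶ suppData G Z hZ.isLocallyClosed),
          e F' (φ ≫ ψ) = (e F ψ).comp (cosecMapOn Z φ)) ∧
    (∀ (U : Set X) (hU : IsOpen U),
      ∃ e : ∀ F : AbData X, (suppData G U hU.isLocallyClosed ⟶ F) ≃ (G →+ secGrpOn U F),
        ∀ (F F' : AbData X) (φ : F ⟶ F') (ψ : suppData G U hU.isLocallyClosed ⟶ F),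
          e F' (ψ ≫ φ) = (secMapOn U φ).comp (e F ψ)) := by
  refine ⟨fun Z hZ => ⟨fun F => (homSuppDataEquiv G hZ F).trans (cosecHomEquiv _ G).symm, ?_⟩,
    fun U hU => ⟨fun F => (suppDataHomEquiv G hU F).trans (secHomEquiv _ G).symm, ?_⟩⟩
  · intro F F' φ ψ
    refine cosecHom_ext fun x a => ?_
    change cosecLift _ (cosecMk _ x a) = cosecLift _ (cosecMap ((restr Z).map φ) (cosecMk _ x a))
    rw [cosecMap_mk, cosecLift_mk, cosecLift_mk]
    rfl
  · intro F F' φ ψ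
    rfl

/-- **Statement 15.** Let `X` be a finite space, `F` an abelian data on `X` and `G` an abelian
group. (1) For every closed `Z ⊆ X`, `Hom(F, G_Z) ≅ Hom(L(Z,F), G)` naturally in `F`.
(2) For every open `U ⊆ X`, `Hom(G_U, F) ≅ Hom(G, Γ(U,F))` naturally in `F`. -/
theorem statement15 {X : Type} [TopologicalSpace X] [Finite X] (G : AddCommGrpCat.{0}) :
    (∀ (Z : Set X) (hZ : IsClosed Z),
      ∃ e : ∀ F : AbData X, (F ⟶ suppData G Z hZ.isLocallyClosed) ≃ (cosecGrpOn Z F →+ G),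
        ∀ (F F' : AbData X) (φ : F' ⟶ F) (ψ : F ⟶ suppData G Z hZ.isLocallyClosed),
          e F' (φ ≫ ψ) = (e F ψ).comp (cosecMapOn Z φ)) ∧
    (∀ (U : Set X) (hU : IsOpen U),
      ∃ e : ∀ F : AbData X, (suppData G U hU.isLocallyClosed ⟶ F) ≃ (G →+ secGrpOn U F),
        ∀ (F F' : AbData X) (φ : F ⟶ F') (ψ : suppData G U hU.isLocallyClosed ⟶ F),
          e F' (ψ ≫ φ) = (secMapOn U φ).comp (e F ψ)) :=
  statement15_general G
end
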